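/- Let (Z_t) satisfy Z_t = μ + V_t with μ ≠ 0, where n^{-1/2} Σ_{t=1}^{⌊n·⌋} V_t ⇒ σB(·) in D([0,1],ℝ) with σ > 0. Then the self-normalized statistic Q_n = n Z̄_n² / R_n² diverges to ∞ in probability: for every M > 0, P(Q_n > M) → 1. -/

import Mathlib

open MeasureTheory Filter Set
open scoped UniformConvergence Topology ENNReal NNReal

noncomputable section

/-- Convergence in distribution of `E`-valued random elements, tested against
bounded continuous functions. -/
def TendstoInDist {Ω Ω' E : Type*} [MeasurableSpace Ω] [MeasurableSpace Ω']
    [TopologicalSpace E] (μ : Measure Ω) (ν : Measure Ω')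
    (X : ℕ → Ω → E) (Y : Ω' → E) : Prop :=
  ∀ f : BoundedContinuousFunction E ℝ,
    Tendsto (fun n => ∫ ω, f (X n ω) ∂μ) atTop (𝓝 (∫ ω, f (Y ω) ∂ν))

/-- A standard one-dimensional Brownian motion: starts at `0`, has continuous
sample paths, Gaussian increments with variance equal to the time increment,
and independent increments over disjoint intervals. -/
structure IsBrownianMotion {Ω : Type*} [MeasurableSpace Ω] (μ : Measure Ω)
    (B : ℝ → Ω → ℝ) : Prop where
  meas : ∀ t, Measurable (B t)
  init : ∀ᵐ ω ∂μ, B 0 ω = 0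
  cont : ∀ᵐ ω ∂μ, Continuous fun t => B t ω
  gauss : ∀ s t : ℝ, 0 ≤ s → s ≤ t →
    Measure.map (fun ω => B t ω - B s ω) μ =
      ProbabilityTheory.gaussianReal 0 (Real.toNNReal (t - s))
  indep : ∀ s t u v : ℝ, 0 ≤ s → s ≤ t → t ≤ u → u ≤ v →
    ProbabilityTheory.IndepFun (fun ω => B t ω - B s ω)
      (fun ω => B v ω - B u ω) μ

/-- Path space: functions on `[0,1]` with the uniform topology. -/
abbrev PathR := Set.Icc (0:ℝ) 1 →ᵤ ℝ

variable {Ω : Type*}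

/-- Sample mean `Z̄_n = n⁻¹ Σ_{t=1}^n Z_t`. -/
def sampleMean (Z : ℕ → Ω → ℝ) (n : ℕ) (ω : Ω) : ℝ :=
  (∑ t ∈ Finset.Icc 1 n, Z t ω) / n

/-- Normalized partial sum process `S_n(r) = n^{-1/2} Σ_{t=1}^{⌊nr⌋} Z_t`. -/
def partialSumProc (Z : ℕ → Ω → ℝ) (n : ℕ) (ω : Ω) : PathR :=
  UniformFun.ofFun fun r : Set.Icc (0:ℝ) 1 =>
    (∑ t ∈ Finset.Icc 1 ⌊(n : ℝ) * (r : ℝ)⌋₊, Z t ω) / Real.sqrt n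

/-- Centered CUSUM process `T_n(r) = n^{-1/2} Σ_{t=1}^{⌊nr⌋} (Z_t − Z̄_n)`. -/
def cusum (Z : ℕ → Ω → ℝ) (n : ℕ) (ω : Ω) (r : ℝ) : ℝ :=
  (∑ t ∈ Finset.Icc 1 ⌊(n : ℝ) * r⌋₊, (Z t ω - sampleMean Z n ω)) / Real.sqrt n

/-- Adjusted range `R_n = sup_{0≤r≤1} T_n(r) − inf_{0≤r≤1} T_n(r)`. -/
def adjRange (Z : ℕ → Ω → ℝ) (n : ℕ) (ω : Ω) : ℝ :=
  sSup (cusum Z n ω '' Set.Icc (0:ℝ) 1) - sInf (cusum Z n ω '' Set.Icc (0:ℝ) 1)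

/-- Self-normalized statistic `Q_n = n Z̄_n² / R_n²`. -/
def Qstat (Z : ℕ → Ω → ℝ) (n : ℕ) (ω : Ω) : ℝ :=
  n * (sampleMean Z n ω) ^ 2 / (adjRange Z n ω) ^ 2

/-- Adjusted range of the Brownian bridge `𝔹(r) = B(r) − r B(1)` over `[0,1]`. -/
def bridgeRange (B : ℝ → Ω → ℝ) (ω : Ω) : ℝ :=
  sSup ((fun r : ℝ => B r ω - r * B 1 ω) '' Set.Icc (0:ℝ) 1) -
    sInf ((fun r : ℝ => B r ω - r * B 1 ω) '' Set.Icc (0:ℝ) 1)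

/-!
Centering by the sample mean removes `μ₀` from the CUSUM process, so `R_n` depends only on the
partial-sum process `S_n` of `V`, while `Z̄_n = μ₀ + S_n(1)/√n`. If `sup |S_n| ≤ C` and the bridge
value `S_n(1/2) - S_n(1)/2` exceeds `δ` in absolute value, then for large `n` one gets
`δ/2 ≤ R_n ≤ 4C` and `|Z̄_n| ≥ |μ₀|/2`, hence `Q_n ≥ n μ₀² / (64 C²) > M`.
A continuous `[0,1]`-valued path functional that is positive only on this event and equals `1` on
a slightly smaller one lets the FCLT carry the probability of the event over from `σB`. For `σB`
it is close to `1` for suitable `C, δ`, because Brownian paths are bounded and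
`B(1/2) - B(1)/2 = 0` only on a null set: `B(1/2) - B(0)` and `B(1) - B(1/2)` are independent
and the latter has no atoms.
-/

open TopologicalSpace (SeparableSpace denseSeq denseRange_denseSeq)

section PathFunctionals

-- The cap keeps the supremum finite: an unbounded `⨆` in `ℝ` takes the junk value `0`.
def truncSupNorm (c : ℝ) (x : PathR) : ℝ := ⨆ r, min |UniformFun.toFun x r| c

def bridgeAtHalf (x : PathR) : ℝ :=
  UniformFun.toFun x ⟨1 / 2, by norm_num⟩ - UniformFun.toFun x 1 / 2

lemma abs_ciSup_sub_ciSup_le {ι : Type*} [Nonempty ι] {f g : ι → ℝ}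
    (hf : BddAbove (range f)) (hg : BddAbove (range g)) {C : ℝ} (h : ∀ i, |f i - g i| ≤ C) :
    |(⨆ i, f i) - ⨆ i, g i| ≤ C := by
  rw [abs_sub_le_iff]
  constructor
  · refine sub_le_iff_le_add.2 (ciSup_le fun i => ?_)
    linarith [le_ciSup hg i, (abs_le.1 (h i)).2]
  · refine sub_le_iff_le_add.2 (ciSup_le fun i => ?_)
    linarith [le_ciSup hf i, (abs_le.1 (h i)).1]

lemma bddAbove_range_min_abs (c : ℝ) (x : PathR) :
    BddAbove (range fun r => min |UniformFun.toFun x r| c) :=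
  ⟨c, by rintro _ ⟨r, rfl⟩; exact min_le_right _ _⟩

lemma lipschitzWith_truncSupNorm (c : ℝ) : LipschitzWith 1 (truncSupNorm c) := by
  refine LipschitzWith.of_edist_le fun x y => ?_
  rcases eq_top_or_lt_top (edist x y) with hxy | hxy
  · simp [hxy]
  rw [edist_dist, Real.dist_eq, ENNReal.ofReal_le_iff_le_toReal hxy.ne]
  refine abs_ciSup_sub_ciSup_le (bddAbove_range_min_abs c x) (bddAbove_range_min_abs c y)
    fun r => ?_
  have hr : edist (UniformFun.toFun x r) (UniformFun.toFun y r) ≤ edist x y :=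
    UniformFun.edist_eval_le
  rw [edist_dist, Real.dist_eq, ENNReal.ofReal_le_iff_le_toReal hxy.ne] at hr
  calc |min |UniformFun.toFun x r| c - min |UniformFun.toFun y r| c|
      ≤ max |(|UniformFun.toFun x r| - |UniformFun.toFun y r|)| |c - c| :=
        abs_min_sub_min_le_max _ _ _ _
    _ = |(|UniformFun.toFun x r| - |UniformFun.toFun y r|)| := by simp
    _ ≤ |UniformFun.toFun x r - UniformFun.toFun y r| := abs_abs_sub_abs_le_abs_sub _ _
    _ ≤ _ := hr

lemma continuous_bridgeAtHalf : Continuous bridgeAtHalf :=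
  (UniformFun.lipschitzWith_eval _).continuous.sub
    ((UniformFun.lipschitzWith_eval _).continuous.div_const 2)

/-- A continuous substitute for the indicator of `{x | sup |x| < c ∧ δ < |bridgeAtHalf x|}`. -/
def testFn (c δ : ℝ) (x : PathR) : ℝ :=
  max 0 (min 1 (min (c - truncSupNorm c x) (|bridgeAtHalf x| / δ - 1)))

lemma testFn_mem_Icc (c δ : ℝ) (x : PathR) : testFn c δ x ∈ Icc (0 : ℝ) 1 :=
  ⟨le_max_left _ _, max_le zero_le_one (min_le_left _ _)⟩

lemma continuous_testFn (c δ : ℝ) : Continuous (testFn c δ) := by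
  have := (lipschitzWith_truncSupNorm c).continuous
  have := continuous_bridgeAtHalf
  unfold testFn
  fun_prop

lemma testFn_pos {c δ : ℝ} {x : PathR} (hδ : 0 < δ) (h : 0 < testFn c δ x) :
    (∀ r, |UniformFun.toFun x r| < c) ∧ δ < |bridgeAtHalf x| := by
  have h' : 0 < min (c - truncSupNorm c x) (|bridgeAtHalf x| / δ - 1) := by
    by_contra! hle
    simp [testFn, min_le_of_right_le hle] at h
  rw [lt_min_iff, sub_pos, sub_pos, one_lt_div hδ] at h'
  refine ⟨fun r => ?_, h'.2⟩
  have := (le_ciSup (bddAbove_range_min_abs c x) r).trans_lt h'.1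
  exact (min_lt_iff.1 this).resolve_right (lt_irrefl c)

lemma testFn_eq_one {c δ : ℝ} {x : PathR} (hδ : 0 < δ) (hx : ∀ r, |UniformFun.toFun x r| ≤ c - 1)
    (hbr : 2 * δ ≤ |bridgeAtHalf x|) : testFn c δ x = 1 := by
  have hN : truncSupNorm c x ≤ c - 1 := ciSup_le fun r => (min_le_left _ _).trans (hx r)
  have hm : 1 ≤ |bridgeAtHalf x| / δ - 1 := by rw [le_sub_iff_add_le, le_div_iff₀ hδ]; linarith
  simp [testFn, le_min (by linarith : 1 ≤ c - truncSupNorm c x) hm]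

def testBCF (c δ : ℝ) : BoundedContinuousFunction PathR ℝ :=
  .mkOfBound ⟨testFn c δ, continuous_testFn c δ⟩ 1 fun x y =>
    Real.dist_le_of_mem_Icc_01 (testFn_mem_Icc c δ x) (testFn_mem_Icc c δ y)

end PathFunctionals

section SampleStatistics

lemma csSup_sub_csInf_le_of_abs_le {s : Set ℝ} (hs : s.Nonempty) {C : ℝ}
    (h : ∀ a ∈ s, |a| ≤ C) : sSup s - sInf s ≤ 2 * C := by
  have hsup : sSup s ≤ C := csSup_le hs fun a ha => (abs_le.1 (h a ha)).2
  have hinf : -C ≤ sInf s := le_csInf hs fun a ha => (abs_le.1 (h a ha)).1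
  linarith

variable (V : ℕ → Ω → ℝ) (n : ℕ) (ω : Ω)

lemma sampleMean_const_add (a : ℝ) (hn : n ≠ 0) :
    sampleMean (fun t ω => a + V t ω) n ω = a + sampleMean V n ω := by
  simp only [sampleMean, Finset.sum_add_distrib, Finset.sum_const, Nat.card_Icc,
    add_tsub_cancel_right, nsmul_eq_mul]
  field_simp

lemma cusum_const_add (a : ℝ) : cusum (fun t ω => a + V t ω) n ω = cusum V n ω := by
  funext r
  rcases eq_or_ne n 0 with rfl | hn
  · simp [cusum]
  · simp only [cusum, sampleMean_const_add V n ω a hn, add_sub_add_left_eq_sub]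

lemma adjRange_const_add (a : ℝ) : adjRange (fun t ω => a + V t ω) n ω = adjRange V n ω := by
  rw [adjRange, adjRange, cusum_const_add]

lemma sampleMean_eq_div_sqrt :
    sampleMean V n ω = UniformFun.toFun (partialSumProc V n ω) 1 / √n := by
  simp only [sampleMean, partialSumProc, UniformFun.toFun_ofFun, Set.Icc.coe_one, mul_one,
    Nat.floor_natCast, div_div, Real.mul_self_sqrt n.cast_nonneg]

lemma cusum_eq_sub_mul (r : Icc (0 : ℝ) 1) :
    cusum V n ω r = UniformFun.toFun (partialSumProc V n ω) r -
      ⌊(n : ℝ) * r⌋₊ / n * UniformFun.toFun (partialSumProc V n ω) 1 := by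
  simp only [cusum, Finset.sum_sub_distrib, Finset.sum_const, Nat.card_Icc, add_tsub_cancel_right,
    nsmul_eq_mul, sampleMean_eq_div_sqrt, partialSumProc, UniformFun.toFun_ofFun]
  generalize ⌊(n : ℝ) * r⌋₊ = k
  rcases eq_or_ne n 0 with rfl | hn
  · simp
  have hs : √(n : ℝ) ≠ 0 := by positivity
  field_simp
  rw [Real.sq_sqrt n.cast_nonneg]

lemma cusum_zero : cusum V n ω 0 = 0 := by
  simp [cusum]

lemma natFloor_mul_div_mem_Icc (r : Icc (0 : ℝ) 1) :
    (⌊(n : ℝ) * r⌋₊ / n : ℝ) ∈ Icc (0 : ℝ) 1 := by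
  refine ⟨by positivity, div_le_one_of_le₀ ?_ n.cast_nonneg⟩
  exact (Nat.floor_le (mul_nonneg n.cast_nonneg r.2.1)).trans
    (mul_le_of_le_one_right n.cast_nonneg r.2.2)

lemma abs_cusum_half_sub_bridgeAtHalf_le (hn : n ≠ 0) :
    |cusum V n ω (1 / 2) - bridgeAtHalf (partialSumProc V n ω)| ≤
      |UniformFun.toFun (partialSumProc V n ω) 1| / n := by
  have hn' : (0 : ℝ) < n := by positivity
  have hk := Nat.floor_le (by positivity : (0 : ℝ) ≤ n * (1 / 2))
  have hk' := Nat.lt_floor_add_one ((n : ℝ) * (1 / 2))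
  have herr : |1 / 2 - (⌊(n : ℝ) * (1 / 2)⌋₊ : ℝ) / n| ≤ 1 / (n : ℝ) := by
    rw [show (1 / 2 : ℝ) - ⌊(n : ℝ) * (1 / 2)⌋₊ / n = (n * (1 / 2) - ⌊(n : ℝ) * (1 / 2)⌋₊) / n by
      field_simp, abs_div, abs_of_pos hn', abs_of_nonneg (by linarith)]
    gcongr
    linarith
  rw [cusum_eq_sub_mul V n ω ⟨1 / 2, by norm_num⟩, bridgeAtHalf]
  calc _ = |1 / 2 - (⌊(n : ℝ) * (1 / 2)⌋₊ : ℝ) / n| *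
        |UniformFun.toFun (partialSumProc V n ω) 1| := by
        rw [← abs_mul]; ring_nf
    _ ≤ 1 / (n : ℝ) * |UniformFun.toFun (partialSumProc V n ω) 1| := by gcongr
    _ = _ := by ring

variable {V n ω} {C : ℝ}

lemma abs_cusum_le (hS : ∀ r, |UniformFun.toFun (partialSumProc V n ω) r| ≤ C)
    (r : Icc (0 : ℝ) 1) : |cusum V n ω r| ≤ 2 * C := by
  obtain ⟨hq0, hq1⟩ := natFloor_mul_div_mem_Icc n r
  rw [cusum_eq_sub_mul]
  set S := UniformFun.toFun (partialSumProc V n ω)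
  calc |S r - ⌊(n : ℝ) * r⌋₊ / n * S 1| ≤ |S r| + |⌊(n : ℝ) * r⌋₊ / n * S 1| := abs_sub _ _
    _ = |S r| + ⌊(n : ℝ) * r⌋₊ / n * |S 1| := by rw [abs_mul, abs_of_nonneg hq0]
    _ ≤ C + 1 * C := by gcongr; exacts [hS r, hS 1]
    _ = 2 * C := by ring

lemma abs_le_of_mem_image_cusum (hS : ∀ r, |UniformFun.toFun (partialSumProc V n ω) r| ≤ C) :
    ∀ a ∈ cusum V n ω '' Icc 0 1, |a| ≤ 2 * C := by
  rintro _ ⟨r, hr, rfl⟩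
  exact abs_cusum_le hS ⟨r, hr⟩

lemma adjRange_le (hS : ∀ r, |UniformFun.toFun (partialSumProc V n ω) r| ≤ C) :
    adjRange V n ω ≤ 4 * C := by
  have := csSup_sub_csInf_le_of_abs_le
    (⟨0, 0, ⟨le_rfl, zero_le_one⟩, cusum_zero V n ω⟩ : (cusum V n ω '' Icc 0 1).Nonempty)
    (abs_le_of_mem_image_cusum hS)
  unfold adjRange
  linarith

lemma abs_cusum_le_adjRange (hS : ∀ r, |UniformFun.toFun (partialSumProc V n ω) r| ≤ C)
    (r : Icc (0 : ℝ) 1) : |cusum V n ω r| ≤ adjRange V n ω := by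
  have hA : BddAbove (cusum V n ω '' Icc 0 1) :=
    ⟨2 * C, fun a ha => (abs_le.1 (abs_le_of_mem_image_cusum hS a ha)).2⟩
  have hB : BddBelow (cusum V n ω '' Icc 0 1) :=
    ⟨-(2 * C), fun a ha => (abs_le.1 (abs_le_of_mem_image_cusum hS a ha)).1⟩
  have hr := mem_image_of_mem (cusum V n ω) r.2
  have h0 : (0 : ℝ) ∈ cusum V n ω '' Icc 0 1 := ⟨0, ⟨le_rfl, zero_le_one⟩, cusum_zero V n ω⟩
  rw [abs_le]
  unfold adjRange
  constructor
  · linarith [le_csSup hA h0, csInf_le hB hr]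
  · linarith [le_csSup hA hr, csInf_le hB h0]

end SampleStatistics

lemma lt_Qstat_of_bounds {Z V : ℕ → Ω → ℝ} {μ₀ : ℝ} (hZ : ∀ t ω, Z t ω = μ₀ + V t ω)
    {M C δ : ℝ} (hM : 0 ≤ M) (hδ : 0 < δ) {n : ℕ} (hn : n ≠ 0)
    (hδn : 2 * C ≤ δ * n) (hμn : 2 * C ≤ √n * |μ₀|) (hMn : 64 * M * C ^ 2 < n * μ₀ ^ 2) {ω : Ω}
    (hS : ∀ r, |UniformFun.toFun (partialSumProc V n ω) r| ≤ C)
    (hbr : δ ≤ |bridgeAtHalf (partialSumProc V n ω)|) :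
    M < Qstat Z n ω := by
  obtain rfl : Z = fun t ω => μ₀ + V t ω := funext fun t => funext (hZ t)
  have hn' : (0 : ℝ) < n := by positivity
  have hS1 := hS 1
  have hR_le : adjRange V n ω ≤ 4 * C := adjRange_le hS
  have hR_ge : δ / 2 ≤ adjRange V n ω := by
    have h := abs_cusum_half_sub_bridgeAtHalf_le V n ω hn
    have hhalf := abs_cusum_le_adjRange hS ⟨1 / 2, by norm_num⟩
    have hC : |UniformFun.toFun (partialSumProc V n ω) 1| / n ≤ δ / 2 := by
      rw [div_le_iff₀ hn']; linarith
    have := abs_sub_abs_le_abs_sub (bridgeAtHalf (partialSumProc V n ω)) (cusum V n ω (1 / 2))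
    rw [abs_sub_comm] at this
    simp only at hhalf
    linarith
  have hmean : |μ₀| / 2 ≤ |sampleMean (fun t ω => μ₀ + V t ω) n ω| := by
    rw [sampleMean_const_add V n ω μ₀ hn, sampleMean_eq_div_sqrt]
    have hsqrt : 0 < √(n : ℝ) := by positivity
    have : |UniformFun.toFun (partialSumProc V n ω) 1 / √n| ≤ |μ₀| / 2 := by
      rw [abs_div, abs_of_pos hsqrt, div_le_iff₀ hsqrt]; linarith
    linarith [abs_sub_abs_le_abs_add μ₀ (UniformFun.toFun (partialSumProc V n ω) 1 / √n)]
  rw [Qstat, adjRange_const_add, lt_div_iff₀ (pow_pos (by linarith) 2)]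
  calc M * adjRange V n ω ^ 2 ≤ M * (4 * C) ^ 2 := by gcongr; linarith
    _ < n * (|μ₀| / 2) ^ 2 := by rw [div_pow, sq_abs]; linarith
    _ ≤ n * sampleMean (fun t ω => μ₀ + V t ω) n ω ^ 2 := by
      rw [← sq_abs (sampleMean _ n ω)]; gcongr

lemma eventually_lt_Qstat {Z V : ℕ → Ω → ℝ} {μ₀ : ℝ} (hZ : ∀ t ω, Z t ω = μ₀ + V t ω)
    (hμ₀ : μ₀ ≠ 0) {M : ℝ} (hM : 0 ≤ M) (C : ℝ) {δ : ℝ} (hδ : 0 < δ) :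
    ∀ᶠ n in atTop, ∀ ω, (∀ r, |UniformFun.toFun (partialSumProc V n ω) r| ≤ C) →
      δ ≤ |bridgeAtHalf (partialSumProc V n ω)| → M < Qstat Z n ω := by
  have hn := tendsto_natCast_atTop_atTop (R := ℝ)
  filter_upwards [eventually_ne_atTop 0,
    (hn.const_mul_atTop hδ).eventually_ge_atTop (2 * C),
    ((Real.tendsto_sqrt_atTop.comp hn).atTop_mul_const (abs_pos.2 hμ₀)).eventually_ge_atTop (2 * C),
    (hn.atTop_mul_const (sq_pos_of_ne_zero hμ₀)).eventually_gt_atTop (64 * M * C ^ 2)]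
    with n hn0 hδn hμn hMn ω hS hbr
  exact lt_Qstat_of_bounds hZ hM hδ hn0 hδn hμn hMn hS hbr

section Probability

variable [MeasurableSpace Ω] {μ : Measure Ω}

lemma integral_le_measureReal_of_pos_imp_mem [IsFiniteMeasure μ] {g : Ω → ℝ} {G : Set Ω}
    (hg : ∀ ω, g ω ≤ 1) (hG : ∀ ω, 0 < g ω → ω ∈ G) : ∫ ω, g ω ∂μ ≤ μ.real G := by
  by_cases hint : Integrable g μ
  · have hGm := measurableSet_toMeasurable μ G
    calc ∫ ω, g ω ∂μ ≤ ∫ ω, (toMeasurable μ G).indicator 1 ω ∂μ := by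
          refine integral_mono hint ((integrable_const (1 : ℝ)).indicator hGm) fun ω => ?_
          by_cases hω : ω ∈ toMeasurable μ G
          · simpa [hω] using hg ω
          · rw [indicator_of_notMem hω]
            by_contra! h
            exact hω (subset_toMeasurable μ G (hG ω h))
      _ = μ.real G := by rw [integral_indicator_one hGm, measureReal_def, measure_toMeasurable,
          measureReal_def]
  · rw [integral_undef hint]
    exact measureReal_nonneg

lemma measure_eq_zero_of_indepFun {β : Type*} [MeasurableSpace β] [MeasurableEq β]
    [IsFiniteMeasure μ] {X Y : Ω → β} (hX : Measurable X) (hY : Measurable Y)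
    (hXY : ProbabilityTheory.IndepFun X Y μ) [NullSingletonClass (μ.map Y)] :
    μ {ω | X ω = Y ω} = 0 := by
  have hmap := (ProbabilityTheory.indepFun_iff_map_prod_eq_prod_map_map hX.aemeasurable
    hY.aemeasurable).1 hXY
  have h := Measure.map_apply (hX.prodMk hY) (μ := μ) measurableSet_diagonal
  rw [hmap, Measure.prod_apply measurableSet_diagonal] at h
  rw [show {ω | X ω = Y ω} = (fun ω => (X ω, Y ω)) ⁻¹' diagonal β from rfl, ← h]
  simp [preimage, diagonal]

lemma IsBrownianMotion.measure_bridge_half_eq_zero [IsProbabilityMeasure μ] {B : ℝ → Ω → ℝ}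
    (hB : IsBrownianMotion μ B) : μ {ω | B (1 / 2) ω - B 1 ω / 2 = 0} = 0 := by
  have : NullSingletonClass (μ.map fun ω => B 1 ω - B (1 / 2) ω) := by
    rw [hB.gauss _ _ (by norm_num) (by norm_num)]
    exact ProbabilityTheory.nullSingletonClass_gaussianReal (by norm_num)
  have hinc := measure_eq_zero_of_indepFun ((hB.meas _).sub (hB.meas 0))
    ((hB.meas 1).sub (hB.meas _)) (hB.indep 0 (1 / 2) (1 / 2) 1 le_rfl (by norm_num) le_rfl
      (by norm_num))
  refine measure_mono_null (fun ω hω => ?_) (measure_union_null hinc (ae_iff.1 hB.init))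
  by_cases h0 : B 0 ω = 0
  · left
    simp only [mem_ofPred_eq, Pi.sub_apply] at hω ⊢
    linarith
  · exact Or.inr h0

lemma tendsto_measureReal_lt_atTop [IsFiniteMeasure μ] {f : Ω → ℝ} (hf : Measurable f) :
    Tendsto (fun K => μ.real {ω | K < f ω}) atTop (𝓝 0) := by
  have h := tendsto_measure_iInter_atTop (μ := μ) (s := fun K : ℝ => {ω | K < f ω})
    (fun K => (measurableSet_lt measurable_const hf).nullMeasurableSet)
    (fun K L hKL ω hω => hKL.trans_lt hω) ⟨0, measure_ne_top μ _⟩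
  have hempty : ⋂ K : ℝ, {ω | K < f ω} = ∅ :=
    eq_empty_of_forall_notMem fun ω hω => lt_irrefl (f ω) (mem_iInter.1 hω (f ω))
  rw [hempty, measure_empty] at h
  exact (ENNReal.tendsto_toReal ENNReal.zero_ne_top).comp h

lemma tendsto_measureReal_abs_lt_nhdsGT [IsFiniteMeasure μ] {f : Ω → ℝ} (hf : Measurable f) :
    Tendsto (fun δ => μ.real {ω | |f ω| < δ}) (𝓝[>] 0) (𝓝 (μ.real {ω | f ω = 0})) := by
  have h := tendsto_measure_biInter_gt (μ := μ) (s := fun δ : ℝ => {ω | |f ω| < δ}) (a := 0)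
    (fun δ _ => (measurableSet_lt hf.abs measurable_const).nullMeasurableSet)
    (fun δ δ' _ hδ ω hω => lt_of_lt_of_le hω hδ) ⟨1, one_pos, measure_ne_top μ _⟩
  have hinter : ⋂ δ > (0 : ℝ), {ω | |f ω| < δ} = {ω | f ω = 0} := by
    ext ω
    simp only [mem_iInter, mem_ofPred_eq]
    refine ⟨fun h => abs_eq_zero.1 (le_antisymm (le_of_forall_pos_lt_add fun ε hε => ?_)
      (abs_nonneg _)), fun h δ hδ => by simpa [h] using hδ⟩
    simpa using h ε hε
  rw [hinter] at h
  exact (ENNReal.tendsto_toReal (measure_ne_top μ _)).comp h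

end Probability

lemma ciSup_comp_denseSeq {X : Type*} [TopologicalSpace X] [SeparableSpace X]
    [Nonempty X] {f : X → ℝ} (hf : Continuous f) :
    ⨆ j, f (denseSeq X j) = ⨆ x, f x :=
  calc ⨆ j, f (denseSeq X j)
      = ⨆ s : range (denseSeq X), f s :=
        (rangeFactorization_surjective (f := denseSeq X)).iSup_comp fun s => f s
    _ = ⨆ x, f x := Dense.ciSup' (denseRange_denseSeq X) hf

section BrownianLimit

variable [MeasurableSpace Ω] {μ : Measure Ω} {B : ℝ → Ω → ℝ}

def scaledPath (σ : ℝ) (B : ℝ → Ω → ℝ) (ω : Ω) : PathR :=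
  UniformFun.ofFun fun r : Icc (0 : ℝ) 1 => σ * B r ω

lemma measurable_bridgeAtHalf_scaledPath (σ : ℝ) (hB : ∀ t, Measurable (B t)) :
    Measurable fun ω => bridgeAtHalf (scaledPath σ B ω) :=
  ((hB _).const_mul σ).sub (((hB 1).const_mul σ).div_const 2)

lemma aemeasurable_ciSup_of_ae_continuous {X : Type*} [TopologicalSpace X]
    [SeparableSpace X] [Nonempty X] {F : X → Ω → ℝ} (hF : ∀ x, Measurable (F x))
    (hc : ∀ᵐ ω ∂μ, Continuous fun x => F x ω) : AEMeasurable (fun ω => ⨆ x, F x ω) μ :=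
  (Measurable.iSup fun j => hF (denseSeq X j)).aemeasurable.congr
    (hc.mono fun _ hω => ciSup_comp_denseSeq hω)

lemma IsBrownianMotion.integral_testFn_ge [IsProbabilityMeasure μ] (hB : IsBrownianMotion μ B)
    (σ K : ℝ) {δ : ℝ} (hδ : 0 < δ) :
    1 - μ.real {ω | K < ⨆ j, |σ * B (denseSeq (Icc (0 : ℝ) 1) j) ω|}
      - μ.real {ω | |bridgeAtHalf (scaledPath σ B ω)| < 2 * δ}
      ≤ ∫ ω, testFn (K + 1) δ (scaledPath σ B ω) ∂μ := by
  set A₁ := {ω | K < ⨆ j, |σ * B (denseSeq (Icc (0 : ℝ) 1) j) ω|}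
  set A₂ := {ω | |bridgeAtHalf (scaledPath σ B ω)| < 2 * δ}
  have hbr := measurable_bridgeAtHalf_scaledPath σ hB.meas
  have hA₁ : MeasurableSet A₁ := measurableSet_lt measurable_const
    (Measurable.iSup fun j => ((hB.meas _).const_mul σ).abs)
  have hA₂ : MeasurableSet A₂ := measurableSet_lt hbr.abs measurable_const
  have hcont : ∀ᵐ ω ∂μ, Continuous fun r : Icc (0 : ℝ) 1 => σ * B r ω :=
    hB.cont.mono fun ω hω => continuous_const.mul (hω.comp continuous_subtype_val)
  have hN : AEMeasurable (fun ω => truncSupNorm (K + 1) (scaledPath σ B ω)) μ :=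
    aemeasurable_ciSup_of_ae_continuous
      (fun r => ((hB.meas r).const_mul σ).abs.min measurable_const)
      (hcont.mono fun ω hω => hω.abs.min continuous_const)
  have hint : Integrable (fun ω => testFn (K + 1) δ (scaledPath σ B ω)) μ := by
    refine .of_bound ?_ 1 (ae_of_all _ fun ω => ?_)
    · exact (aemeasurable_const.max (aemeasurable_const.min ((hN.const_sub _).min
        ((hbr.abs.div_const δ).sub_const 1).aemeasurable))).aestronglyMeasurable
    · obtain ⟨h0, h1⟩ := testFn_mem_Icc (K + 1) δ (scaledPath σ B ω)
      rwa [Real.norm_eq_abs, abs_of_nonneg h0]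
  have hlow : ∀ᵐ ω ∂μ, 1 - A₁.indicator 1 ω - A₂.indicator 1 ω ≤
      testFn (K + 1) δ (scaledPath σ B ω) := by
    filter_upwards [hcont] with ω hω
    have h01 := testFn_mem_Icc (K + 1) δ (scaledPath σ B ω)
    simp only [indicator_apply, Pi.one_apply]
    split_ifs with h₁ h₂ h₂
    iterate 3 linarith [h01.1]
    rw [testFn_eq_one hδ (fun r => ?_) (not_lt.1 h₂)]
    · norm_num
    have hsup := le_ciSup (isCompact_range hω.abs).bddAbove r
    rw [← ciSup_comp_denseSeq hω.abs] at hsup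
    simp only [mem_ofPred_eq, not_lt, A₁] at h₁
    show |σ * B r ω| ≤ K + 1 - 1
    linarith
  have hI₀ : Integrable (A₁.indicator (1 : Ω → ℝ)) μ := (integrable_const (1 : ℝ)).indicator hA₁
  have hI₁ : Integrable (fun ω => (1 : ℝ) - A₁.indicator 1 ω) μ := (integrable_const _).sub hI₀
  have hI₂ : Integrable (A₂.indicator (1 : Ω → ℝ)) μ := (integrable_const (1 : ℝ)).indicator hA₂
  calc 1 - μ.real A₁ - μ.real A₂ = ∫ ω, (1 - A₁.indicator 1 ω - A₂.indicator 1 ω) ∂μ := by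
        rw [integral_sub hI₁ hI₂, integral_sub (integrable_const (1 : ℝ)) hI₀,
          integral_indicator_one hA₁, integral_indicator_one hA₂]
        simp
    _ ≤ _ := integral_mono_ae (hI₁.sub hI₂) hint hlow

lemma IsBrownianMotion.exists_lt_integral_testFn [IsProbabilityMeasure μ]
    (hB : IsBrownianMotion μ B) {σ : ℝ} (hσ : σ ≠ 0) {a : ℝ} (ha : a < 1) :
    ∃ c δ, 0 < δ ∧ a < ∫ ω, testFn c δ (scaledPath σ B ω) ∂μ := by
  have hη : 0 < (1 - a) / 3 := by linarith
  have hbr := measurable_bridgeAtHalf_scaledPath σ hB.meas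
  have hbr0 : μ.real {ω | bridgeAtHalf (scaledPath σ B ω) = 0} = 0 := by
    rw [measureReal_eq_zero_iff]
    refine measure_mono_null (fun ω hω => ?_) hB.measure_bridge_half_eq_zero
    have : σ * (B (1 / 2) ω - B 1 ω / 2) = 0 := by
      rw [← hω.out, bridgeAtHalf, scaledPath, UniformFun.toFun_ofFun, Set.Icc.coe_one]
      ring
    exact (mul_eq_zero.1 this).resolve_left hσ
  obtain ⟨K, hK⟩ := ((tendsto_measureReal_lt_atTop (μ := μ) (Measurable.iSup fun j =>
    ((hB.meas (denseSeq (Icc (0 : ℝ) 1) j)).const_mul σ).abs)).eventually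
      (gt_mem_nhds hη)).exists
  obtain ⟨δ, hδsmall, hδ⟩ := (((tendsto_measureReal_abs_lt_nhdsGT hbr).eventually
    (gt_mem_nhds (hbr0 ▸ hη))).and self_mem_nhdsWithin).exists
  refine ⟨K + 1, δ / 2, half_pos hδ, ?_⟩
  have := hB.integral_testFn_ge σ K (half_pos hδ)
  rw [mul_div_cancel₀ δ two_ne_zero] at this
  linarith

end BrownianLimit

/-- **Theorem 2(i), fixed-alternative consistency.** If
`Z_t = μ₀ + V_t` with `μ₀ ≠ 0` and the centered process satisfies the FCLT,
then `Q_n = n Z̄_n² / R_n²` diverges to `∞` in probability. -/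
theorem stmt8 [MeasurableSpace Ω] (μ : Measure Ω) [IsProbabilityMeasure μ]
    (Z V : ℕ → Ω → ℝ) (μ₀ : ℝ) (hμ₀ : μ₀ ≠ 0)
    (hZ : ∀ t ω, Z t ω = μ₀ + V t ω)
    (σ : ℝ) (hσ : 0 < σ) (B : ℝ → Ω → ℝ) (hB : IsBrownianMotion μ B)
    (hFCLT : TendstoInDist μ μ (partialSumProc V)
      (fun ω => UniformFun.ofFun fun r : Set.Icc (0:ℝ) 1 => σ * B r ω)) :
    ∀ M : ℝ, 0 < M →
      Tendsto (fun n => μ {ω | M < Qstat Z n ω}) atTop (𝓝 1) := by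
  intro M hM
  rw [← ENNReal.tendsto_toReal_iff (fun _ => measure_ne_top μ _) ENNReal.one_ne_top]
  refine tendsto_order.2
    ⟨fun a ha => ?_, fun a ha => .of_forall fun n => measureReal_le_one.trans_lt ha⟩
  obtain ⟨c, δ, hδ, hlim⟩ := hB.exists_lt_integral_testFn hσ.ne' (by simpa using ha)
  filter_upwards [(hFCLT (testBCF c δ)).eventually_const_lt hlim,
    eventually_lt_Qstat hZ hμ₀ hM.le c hδ] with n hn hQ
  refine hn.trans_le (integral_le_measureReal_of_pos_imp_mem (fun ω => (testFn_mem_Icc c δ _).2)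
    fun ω hpos => ?_)
  obtain ⟨hS, hbr⟩ := testFn_pos hδ hpos
  exact hQ ω (fun r => (hS r).le) hbr.le
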